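/- arXiv:2208.13735 — 13 statements merged into one kernel-verified Lean document; each statement's English description precedes it below -/
import Mathlib

section
/- Let S be a posemigroup and j a principal closed nucleus on the quantale of lower sets of S. Then the map η: S → P(S)_j given by η(s) = s↓ is an order embedding, preserves all meets that exist in S, and its image η(S) is join-dense in the complete lattice P(S)_j. -/
open Pointwise

/-- For a principal closed nucleus `j` on the quantale of lower sets of a posemigroup `S`,
the map `η : S → P(S)_j`, `η s = s↓`, is an order embedding, preserves all existing meets,
and its image is join-dense in `P(S)_j`. -/
theorem stmt2 {S : Type*} [Semigroup S] [PartialOrder S]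
    [CovariantClass S S (· * ·) (· ≤ ·)]
    [CovariantClass S S (Function.swap (· * ·)) (· ≤ ·)]
    (j : Set S → Set S)
    (hlower : ∀ D : Set S, IsLowerSet D → IsLowerSet (j D))
    (hext : ∀ D : Set S, IsLowerSet D → D ⊆ j D)
    (hmono : ∀ C D : Set S, IsLowerSet C → IsLowerSet D → C ⊆ D → j C ⊆ j D)
    (hidem : ∀ D : Set S, IsLowerSet D → j (j D) = j D)
    (hsubmul : ∀ C D : Set S, IsLowerSet C → IsLowerSet D →
      (↑(lowerClosure (j C * j D)) : Set S) ⊆ j ↑(lowerClosure (C * D)))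
    (hprin : ∀ s : S, j (Set.Iic s) = Set.Iic s) :
    ∃ η : S → {D : Set S // IsLowerSet D ∧ j D = D},
      (∀ s : S, (↑(η s) : Set S) = Set.Iic s) ∧
      (∀ s t : S, η s ≤ η t ↔ s ≤ t) ∧
      (∀ (M : Set S) (m : S), IsGLB M m → IsGLB (η '' M) (η m)) ∧
      (∀ D : {D : Set S // IsLowerSet D ∧ j D = D},
        IsLUB {E | E ∈ Set.range η ∧ E ≤ D} D) := by
  refine ⟨fun s => ⟨Set.Iic s, isLowerSet_Iic s, hprin s⟩, fun s => rfl, ?_, ?_, ?_⟩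
  · intro s t
    constructor
    · intro h
      exact h (le_refl s)
    · intro h x hx
      exact le_trans hx h
  · intro M m hm
    constructor
    · rintro _ ⟨x, hx, rfl⟩
      intro y hy
      exact le_trans hy (hm.1 hx)
    · rintro ⟨D, hD, hDj⟩ hDlb
      intro d hd
      exact hm.2 fun x hx => hDlb ⟨x, hx, rfl⟩ hd
  · rintro ⟨D, hD, hDj⟩
    constructor
    · rintro ⟨E, hEj⟩ ⟨⟨s, hs⟩, hle⟩
      exact hle
    · rintro ⟨F, hF, hFj⟩ hub
      intro d hd
      have hdD : Set.Iic d ⊆ D := fun y hy => hD hy hd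
      have := hub ⟨⟨d, rfl⟩, hdD⟩
      exact this (le_refl d)
end

section
/- Let (S, A) be a marked quantale. Then the collection Id_A(S) of A-ideals of S is closed under arbitrary intersections, and for any lower set C and any A-ideal D, both residuals C→_r D = ⋃{A lower : C·A ⊆ D} and C→_l D = ⋃{A lower : A·C ⊆ D} are A-ideals. Consequently Id_A(S) is a quantic quotient of the quantale of lower sets of S. -/
open Pointwise

/-- The closure `D̄` of a subset of a posemigroup, with `b, c` ranging over `S¹`
(the four cases correspond to `b = c = 1`, `c = 1`, `b = 1`, and `b, c ∈ S`). -/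
def pcl (S : Type*) [Semigroup S] [PartialOrder S] (D : Set S) : Set S :=
  {x | ∀ a : S,
    ((∀ d ∈ D, d ≤ a) → x ≤ a) ∧
    (∀ b : S, (∀ d ∈ D, b * d ≤ a) → b * x ≤ a) ∧
    (∀ c : S, (∀ d ∈ D, d * c ≤ a) → x * c ≤ a) ∧
    (∀ b c : S, (∀ d ∈ D, b * d * c ≤ a) → b * x * c ≤ a)}

/-- A marked quantale structure on a posemigroup `S`: a marking (set of admissible
subsets) containing singletons and closed under translations by elements of `S¹`,
such that every admissible set has a join over which multiplication distributes. -/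
structure MarkedQuantale (S : Type*) [Semigroup S] [PartialOrder S] : Type _ where
  mark : Set (Set S)
  singleton_mem : ∀ a : S, {a} ∈ mark
  mul_left_mem : ∀ G ∈ mark, ∀ a : S, (a * ·) '' G ∈ mark
  mul_right_mem : ∀ G ∈ mark, ∀ b : S, (· * b) '' G ∈ mark
  mul_both_mem : ∀ G ∈ mark, ∀ a b : S, (fun x => a * x * b) '' G ∈ mark
  exists_lub : ∀ M ∈ mark, ∃ m : S, IsLUB M m
  lub_mul_left : ∀ M ∈ mark, ∀ m : S, IsLUB M m → ∀ a : S, IsLUB ((a * ·) '' M) (a * m)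
  lub_mul_right : ∀ M ∈ mark, ∀ m : S, IsLUB M m → ∀ b : S, IsLUB ((· * b) '' M) (m * b)
  lub_mul_both : ∀ M ∈ mark, ∀ m : S, IsLUB M m → ∀ a b : S,
    IsLUB ((fun x => a * x * b) '' M) (a * m * b)

/-- `D` is an `A`-ideal: a lower set closed under joins of its admissible subsets. -/
def IsAIdeal {S : Type*} [Semigroup S] [PartialOrder S] (A : Set (Set S)) (D : Set S) : Prop :=
  IsLowerSet D ∧ ∀ M ∈ A, M ⊆ D → ∀ m : S, IsLUB M m → m ∈ D

set_option linter.unusedSectionVars false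

section Aux

variable {S : Type*} [Semigroup S] [PartialOrder S]
    [CovariantClass S S (· * ·) (· ≤ ·)]
    [CovariantClass S S (Function.swap (· * ·)) (· ≤ ·)]

lemma aIdeal_sInter (A : Set (Set S)) (F : Set (Set S))
    (hF : ∀ D ∈ F, IsAIdeal A D) : IsAIdeal A (⋂₀ F) := by
  constructor
  · intro x y hxy hx E hE
    exact (hF E hE).1 hxy (hx E hE)
  · intro M hM hMsub m hm E hE
    exact (hF E hE).2 M hM (fun x hx => hMsub hx E hE) m hm

/-- The nucleus: smallest `A`-ideal containing `D`. -/
def jfun (A : Set (Set S)) (D : Set S) : Set S := ⋂₀ {E | IsAIdeal A E ∧ D ⊆ E}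

lemma jfun_isAIdeal (A : Set (Set S)) (D : Set S) : IsAIdeal A (jfun A D) :=
  aIdeal_sInter A _ (fun _ hE => hE.1)

lemma subset_jfun (A : Set (Set S)) (D : Set S) : D ⊆ jfun A D :=
  fun _ hx _ hE => hE.2 hx

lemma jfun_min {A : Set (Set S)} {D E : Set S} (hE : IsAIdeal A E) (hDE : D ⊆ E) :
    jfun A D ⊆ E := fun _ hx => hx E ⟨hE, hDE⟩

lemma mulLeft_ideal (mq : MarkedQuantale S) {D : Set S} (hD : IsAIdeal mq.mark D) (c : S) :
    IsAIdeal mq.mark {x | c * x ∈ D} := by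
  constructor
  · intro x y hxy hx
    exact hD.1 (mul_le_mul_right hxy c) hx
  · intro M hM hMsub m hm
    refine hD.2 _ (mq.mul_left_mem M hM c) ?_ _ (mq.lub_mul_left M hM m hm c)
    rintro _ ⟨x, hx, rfl⟩
    exact hMsub hx

lemma mulRight_ideal (mq : MarkedQuantale S) {D : Set S} (hD : IsAIdeal mq.mark D) (c : S) :
    IsAIdeal mq.mark {x | x * c ∈ D} := by
  constructor
  · intro x y hxy hx
    exact hD.1 (mul_le_mul_left hxy c) hx
  · intro M hM hMsub m hm
    refine hD.2 _ (mq.mul_right_mem M hM c) ?_ _ (mq.lub_mul_right M hM m hm c)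
    rintro _ ⟨x, hx, rfl⟩
    exact hMsub hx

lemma resid_right_eq (mq : MarkedQuantale S) (C D : Set S) (hD : IsAIdeal mq.mark D) :
    (⋃₀ {A : Set S | IsLowerSet A ∧ (↑(lowerClosure (C * A)) : Set S) ⊆ D}) =
      {x | ∀ c ∈ C, c * x ∈ D} := by
  apply Set.Subset.antisymm
  · rintro x ⟨A, ⟨_, hA2⟩, hxA⟩ c hc
    exact hA2 (subset_lowerClosure (Set.mul_mem_mul hc hxA))
  · intro x hx
    refine ⟨{x | ∀ c ∈ C, c * x ∈ D}, ⟨?_, ?_⟩, hx⟩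
    · intro a b hab ha c hc
      exact hD.1 (mul_le_mul_right hab c) (ha c hc)
    · intro y hy
      rw [SetLike.mem_coe, mem_lowerClosure] at hy
      obtain ⟨z, hz, hyz⟩ := hy
      obtain ⟨c, hc, a, ha, rfl⟩ := hz
      exact hD.1 hyz (ha c hc)

lemma resid_left_eq (mq : MarkedQuantale S) (C D : Set S) (hD : IsAIdeal mq.mark D) :
    (⋃₀ {A : Set S | IsLowerSet A ∧ (↑(lowerClosure (A * C)) : Set S) ⊆ D}) =
      {x | ∀ c ∈ C, x * c ∈ D} := by
  apply Set.Subset.antisymm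
  · rintro x ⟨A, ⟨_, hA2⟩, hxA⟩ c hc
    exact hA2 (subset_lowerClosure (Set.mul_mem_mul hxA hc))
  · intro x hx
    refine ⟨{x | ∀ c ∈ C, x * c ∈ D}, ⟨?_, ?_⟩, hx⟩
    · intro a b hab ha c hc
      exact hD.1 (mul_le_mul_left hab c) (ha c hc)
    · intro y hy
      rw [SetLike.mem_coe, mem_lowerClosure] at hy
      obtain ⟨z, hz, hyz⟩ := hy
      obtain ⟨a, ha, c, hc, rfl⟩ := hz
      exact hD.1 hyz (ha c hc)

lemma resid_right_ideal (mq : MarkedQuantale S) {C D : Set S} (hD : IsAIdeal mq.mark D) :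
    IsAIdeal mq.mark {x : S | ∀ c ∈ C, c * x ∈ D} := by
  constructor
  · intro x y hxy hx c hc
    exact hD.1 (mul_le_mul_right hxy c) (hx c hc)
  · intro M hM hMsub m hm c hc
    exact (mulLeft_ideal mq hD c).2 M hM (fun x hx => hMsub hx c hc) m hm

lemma resid_left_ideal (mq : MarkedQuantale S) {C D : Set S} (hD : IsAIdeal mq.mark D) :
    IsAIdeal mq.mark {x : S | ∀ c ∈ C, x * c ∈ D} := by
  constructor
  · intro x y hxy hx c hc
    exact hD.1 (mul_le_mul_left hxy c) (hx c hc)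
  · intro M hM hMsub m hm c hc
    exact (mulRight_ideal mq hD c).2 M hM (fun x hx => hMsub hx c hc) m hm

end Aux

/-- For a marked quantale `(S, A)`, the `A`-ideals are closed under arbitrary
intersections, both residuals of a lower set into an `A`-ideal are `A`-ideals, and
consequently `Id_A(S)` is a quantic quotient of the quantale of lower sets of `S`:
there is a quantic nucleus on lower sets whose fixpoints are exactly the `A`-ideals. -/
theorem stmt3 {S : Type*} [Semigroup S] [PartialOrder S]
    [CovariantClass S S (· * ·) (· ≤ ·)]
    [CovariantClass S S (Function.swap (· * ·)) (· ≤ ·)]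
    (mq : MarkedQuantale S) :
    (∀ F : Set (Set S), (∀ D ∈ F, IsAIdeal mq.mark D) → IsAIdeal mq.mark (⋂₀ F)) ∧
    (∀ C D : Set S, IsLowerSet C → IsAIdeal mq.mark D →
      IsAIdeal mq.mark
        (⋃₀ {A : Set S | IsLowerSet A ∧ (↑(lowerClosure (C * A)) : Set S) ⊆ D}) ∧
      IsAIdeal mq.mark
        (⋃₀ {A : Set S | IsLowerSet A ∧ (↑(lowerClosure (A * C)) : Set S) ⊆ D})) ∧
    (∃ j : Set S → Set S,
      (∀ D : Set S, IsLowerSet D → IsLowerSet (j D)) ∧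
      (∀ D : Set S, IsLowerSet D → D ⊆ j D) ∧
      (∀ C D : Set S, IsLowerSet C → IsLowerSet D → C ⊆ D → j C ⊆ j D) ∧
      (∀ D : Set S, IsLowerSet D → j (j D) = j D) ∧
      (∀ C D : Set S, IsLowerSet C → IsLowerSet D →
        (↑(lowerClosure (j C * j D)) : Set S) ⊆ j ↑(lowerClosure (C * D))) ∧
      (∀ D : Set S, IsLowerSet D → (j D = D ↔ IsAIdeal mq.mark D))) := by
  refine ⟨aIdeal_sInter mq.mark, ?_, ?_⟩
  · intro C D _ hD
    constructor
    · rw [resid_right_eq mq C D hD]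
      exact resid_right_ideal mq hD
    · rw [resid_left_eq mq C D hD]
      exact resid_left_ideal mq hD
  · refine ⟨jfun mq.mark, ?_, ?_, ?_, ?_, ?_, ?_⟩
    · exact fun D _ => (jfun_isAIdeal mq.mark D).1
    · exact fun D _ => subset_jfun mq.mark D
    · intro C D _ _ hCD
      exact jfun_min (jfun_isAIdeal mq.mark D) (hCD.trans (subset_jfun mq.mark D))
    · intro D _
      exact Set.Subset.antisymm
        (jfun_min (jfun_isAIdeal mq.mark D) (Set.Subset.refl _))
        (subset_jfun mq.mark _)
    · intro C D _ _
      set E := jfun mq.mark (↑(lowerClosure (C * D)) : Set S) with hEdef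
      have hE : IsAIdeal mq.mark E := jfun_isAIdeal mq.mark _
      have step1 : ∀ c ∈ C, ∀ b ∈ jfun mq.mark D, c * b ∈ E := by
        intro c hc
        refine jfun_min (mulLeft_ideal mq hE c) ?_
        intro d hd
        exact subset_jfun mq.mark _ (subset_lowerClosure (Set.mul_mem_mul hc hd))
      have step2 : ∀ b ∈ jfun mq.mark D, ∀ a ∈ jfun mq.mark C, a * b ∈ E := by
        intro b hb
        refine jfun_min (mulRight_ideal mq hE b) ?_
        intro c hc
        exact step1 c hc b hb
      intro y hy
      rw [SetLike.mem_coe, mem_lowerClosure] at hy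
      obtain ⟨z, hz, hyz⟩ := hy
      obtain ⟨a, ha, b, hb, rfl⟩ := hz
      exact hE.1 hyz (step2 b hb a ha)
    · intro D _
      constructor
      · intro h
        rw [← h]
        exact jfun_isAIdeal mq.mark D
      · intro hD
        exact Set.Subset.antisymm (jfun_min hD (Set.Subset.refl _)) (subset_jfun mq.mark D)
end

section
/- Let (S, A) be a marked quantale and define j_A on lower sets of S by j_A(C) = ⋂{D : D is an A-ideal, C ⊆ D}. Then j_A is a quantic nucleus on the quantale of lower sets of S, and j_A is principal closed, i.e., j_A(s↓) = s↓ for every s ∈ S. -/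
open Pointwise

/-- For a marked quantale `(S, A)`, the map
`j_A(C) = ⋂ {D : D an A-ideal, C ⊆ D}` is a quantic nucleus on the quantale of
lower sets of `S`, and it is principal closed: `j_A(s↓) = s↓` for every `s`. -/
theorem stmt4 {S : Type*} [Semigroup S] [PartialOrder S]
    [CovariantClass S S (· * ·) (· ≤ ·)]
    [CovariantClass S S (Function.swap (· * ·)) (· ≤ ·)]
    (mq : MarkedQuantale S)
    (jA : Set S → Set S)
    (hjA : ∀ C : Set S, jA C = ⋂₀ {D : Set S | IsAIdeal mq.mark D ∧ C ⊆ D}) :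
    (∀ D : Set S, IsLowerSet D → IsLowerSet (jA D)) ∧
    (∀ D : Set S, IsLowerSet D → D ⊆ jA D) ∧
    (∀ C D : Set S, IsLowerSet C → IsLowerSet D → C ⊆ D → jA C ⊆ jA D) ∧
    (∀ D : Set S, IsLowerSet D → jA (jA D) = jA D) ∧
    (∀ C D : Set S, IsLowerSet C → IsLowerSet D →
      (↑(lowerClosure (jA C * jA D)) : Set S) ⊆ jA ↑(lowerClosure (C * D))) ∧
    (∀ s : S, jA (Set.Iic s) = Set.Iic s) := by

  have ideal : ∀ C : Set S, IsAIdeal mq.mark (jA C) := by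
    intro C
    rw [hjA]
    constructor
    · intro a b hab ha
      rw [Set.mem_sInter] at ha ⊢
      intro D hD
      exact hD.1.1 hab (ha D hD)
    · intro M hM hsub m hm
      rw [Set.mem_sInter]
      intro D hD
      exact hD.1.2 M hM (fun x hx => Set.mem_sInter.mp (hsub hx) D hD) m hm
  have ext : ∀ C : Set S, C ⊆ jA C := by
    intro C x hx
    rw [hjA, Set.mem_sInter]
    exact fun D hD => hD.2 hx
  have lee : ∀ C D : Set S, IsAIdeal mq.mark D → C ⊆ D → jA C ⊆ D := by
    intro C D hD hCD x hx
    rw [hjA, Set.mem_sInter] at hx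
    exact hx D ⟨hD, hCD⟩
  refine ⟨fun D _ => (ideal D).1, fun D _ => ext D, ?_, ?_, ?_, ?_⟩
  · intro C D _ _ hCD
    exact lee C (jA D) (ideal D) (hCD.trans (ext D))
  · intro D _
    exact Set.Subset.antisymm (lee (jA D) (jA D) (ideal D) le_rfl) (ext (jA D))
  · intro C D _ _
    set E := jA ↑(lowerClosure (C * D)) with hE
    have hEi := ideal ↑(lowerClosure (C * D))
    have hCDE : ↑(lowerClosure (C * D)) ⊆ E := ext _
    have step1 : ∀ c ∈ C, ∀ d ∈ jA D, c * d ∈ E := by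
      intro c hc d hd
      have hsub : jA D ⊆ {y | c * y ∈ E} := by
        refine lee D _ ⟨?_, ?_⟩ ?_
        · intro y' y hyy hy
          exact hEi.1 (mul_le_mul_right hyy c) hy
        · intro M hM hMsub m hm
          refine hEi.2 _ (mq.mul_left_mem M hM c) ?_ _ (mq.lub_mul_left M hM m hm c)
          rintro _ ⟨y, hy, rfl⟩
          exact hMsub hy
        · intro d' hd'
          exact hCDE (subset_lowerClosure (Set.mul_mem_mul hc hd'))
      exact hsub hd
    have step2 : ∀ a ∈ jA C, ∀ d ∈ jA D, a * d ∈ E := by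
      intro a ha d hd
      have hsub : jA C ⊆ {x | x * d ∈ E} := by
        refine lee C _ ⟨?_, ?_⟩ ?_
        · intro y' y hyy hy
          exact hEi.1 (mul_le_mul_left hyy d) hy
        · intro M hM hMsub m hm
          refine hEi.2 _ (mq.mul_right_mem M hM d) ?_ _ (mq.lub_mul_right M hM m hm d)
          rintro _ ⟨y, hy, rfl⟩
          exact hMsub hy
        · intro c hc
          exact step1 c hc d hd
      exact hsub ha
    intro x hx
    rw [SetLike.mem_coe, mem_lowerClosure] at hx
    obtain ⟨z, hz, hxz⟩ := hx
    obtain ⟨a, ha, b, hb, rfl⟩ := hz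
    exact hEi.1 hxz (step2 a ha b hb)
  · intro s
    refine Set.Subset.antisymm (lee _ _ ⟨?_, ?_⟩ le_rfl) (ext _)
    · intro a b hab ha
      exact hab.trans ha
    · intro M _ hMsub m hm
      exact hm.2 hMsub
end

section
/- Let S be a quantale, regarded as a marked quantale with marking D consisting of all subsets M such that a(⋁M)b = ⋁(aMb) for all a,b ∈ S¹ (i.e., all subsets, since S is a quantale). Then S is isomorphic as a quantale to the quantale Id_D(S) of D-ideals of S, and in fact Id_D(S) = {s↓ : s ∈ S}. -/
open Pointwise

/-- The marking `𝒟` on a posemigroup: all subsets `M` whose join exists and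
distributes under multiplication by elements of `S¹` on both sides. -/
def DMark (S : Type*) [Semigroup S] [PartialOrder S] : Set (Set S) :=
  {M | ∃ m : S, IsLUB M m ∧
    (∀ a : S, IsLUB ((a * ·) '' M) (a * m)) ∧
    (∀ b : S, IsLUB ((· * b) '' M) (m * b)) ∧
    (∀ a b : S, IsLUB ((fun x => a * x * b) '' M) (a * m * b))}

section QuantaleProof

variable {S : Type*} [Semigroup S] [CompleteLattice S] [IsQuantale S]

lemma dmark_all (M : Set S) : M ∈ DMark S := by
  refine ⟨sSup M, isLUB_sSup M, ?_, ?_, ?_⟩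
  · intro a
    have h : a * sSup M = sSup ((a * ·) '' M) := by
      rw [mul_sSup_distrib, sSup_image]
    rw [h]; exact isLUB_sSup _
  · intro b
    have h : sSup M * b = sSup ((· * b) '' M) := by
      rw [sSup_mul_distrib, sSup_image]
    rw [h]; exact isLUB_sSup _
  · intro a b
    have h1 : a * sSup M = sSup ((a * ·) '' M) := by
      rw [mul_sSup_distrib, sSup_image]
    have h : a * sSup M * b = sSup ((fun x => a * x * b) '' M) := by
      calc a * sSup M * b = sSup ((a * ·) '' M) * b := by rw [h1]
        _ = ⨆ y ∈ (a * ·) '' M, y * b := sSup_mul_distrib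
        _ = sSup ((· * b) '' ((a * ·) '' M)) := sSup_image.symm
        _ = sSup ((fun x => a * x * b) '' M) := by rw [Set.image_image]
    rw [h]; exact isLUB_sSup _

lemma ideal_iff (D : Set S) : IsAIdeal (DMark S) D ↔ ∃ s : S, D = Set.Iic s := by
  constructor
  · rintro ⟨hl, hc⟩
    refine ⟨sSup D, ?_⟩
    have hmem : sSup D ∈ D := hc D (dmark_all D) subset_rfl _ (isLUB_sSup D)
    ext t
    exact ⟨fun ht => le_sSup ht, fun ht => hl ht hmem⟩
  · rintro ⟨s, rfl⟩
    refine ⟨fun a b hba ha => le_trans hba ha, fun M _ hM m hm => hm.2 hM⟩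

end QuantaleProof

/-- For a quantale `S` with the marking `𝒟` (which consists of all subsets),
`Id_𝒟(S) = {s↓ : s ∈ S}` and `S` is isomorphic as a quantale to `Id_𝒟(S)`,
whose multiplication is the quantic-quotient one. -/
theorem stmt5 {S : Type*} [Semigroup S] [CompleteLattice S] [IsQuantale S] :
    (∀ M : Set S, M ∈ DMark S) ∧
    (∀ D : Set S, IsAIdeal (DMark S) D ↔ ∃ s : S, D = Set.Iic s) ∧
    ∃ e : S ≃o {D : Set S // IsAIdeal (DMark S) D},
      ∀ x y : S,
        (↑(e (x * y)) : Set S) =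
          ⋂₀ {E : Set S | IsAIdeal (DMark S) E ∧
            (↑(lowerClosure ((↑(e x) : Set S) * (↑(e y) : Set S))) : Set S) ⊆ E} := by
  
  refine ⟨dmark_all, ideal_iff, ?_⟩
  have hI : ∀ s : S, IsAIdeal (DMark S) (Set.Iic s) := fun s => (ideal_iff _).mpr ⟨s, rfl⟩
  refine ⟨⟨⟨fun s => ⟨Set.Iic s, hI s⟩, fun D => sSup D.1, fun s => by simp,
      fun D => ?_⟩, ?_⟩, ?_⟩
  · obtain ⟨s, hs⟩ := (ideal_iff D.1).mp D.2
    exact Subtype.ext (by simp [hs])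
  · intro a b
    exact ⟨fun h => Set.Iic_subset_Iic.mp h, fun h => Set.Iic_subset_Iic.mpr h⟩
  · intro x y
    show Set.Iic (x * y) = _
    apply subset_antisymm
    · rintro t ht E ⟨hE, hsub⟩
      refine hE.1 ht (hsub (subset_lowerClosure ?_))
      exact Set.mul_mem_mul (Set.mem_Iic.mpr le_rfl) (Set.mem_Iic.mpr le_rfl)
    · refine Set.sInter_subset_of_mem ⟨hI _, lowerClosure_min ?_ (hI _).1⟩
      rintro z ⟨a, ha, b, hb, rfl⟩
      exact mul_le_mul' ha hb
end

section
/- Let (S, A) be a marked quantale. The map t: S → Id_A(S) defined by t(s) = s↓ is a multiplicative order embedding that preserves admissible joins: t(ab) = t(a) ∘ t(b) where ∘ is the multiplication of the A-ideal quantale, t(⋁M) = ⋁ t(M) in Id_A(S) for every admissible M ∈ A, t preserves all existing meets in S, and t(S) is join-dense in the complete lattice Id_A(S). -/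
open Pointwise

theorem Iic_isAIdeal {S : Type*} [Semigroup S] [PartialOrder S]
    (A : Set (Set S)) (s : S) : IsAIdeal A (Set.Iic s) := by
  refine ⟨fun x y h hx => le_trans h hx, fun M _ hM m hm => ?_⟩
  exact hm.2 fun x hx => hM hx

/-- For a marked quantale `(S, A)`, the map `t : S → Id_A(S)`, `t s = s↓`, is an
order embedding which is multiplicative (w.r.t. the ideal-quantale multiplication),
preserves admissible joins, preserves all existing meets, and has join-dense image. -/
theorem stmt6 {S : Type*} [Semigroup S] [PartialOrder S]
    [CovariantClass S S (· * ·) (· ≤ ·)]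
    [CovariantClass S S (Function.swap (· * ·)) (· ≤ ·)]
    (mq : MarkedQuantale S) :
    ∃ t : S → {D : Set S // IsAIdeal mq.mark D},
      (∀ s : S, (↑(t s) : Set S) = Set.Iic s) ∧
      (∀ a b : S, t a ≤ t b ↔ a ≤ b) ∧
      (∀ a b : S,
        (↑(t (a * b)) : Set S) =
          ⋂₀ {I : Set S | IsAIdeal mq.mark I ∧
            (↑(lowerClosure ((↑(t a) : Set S) * (↑(t b) : Set S))) : Set S) ⊆ I}) ∧
      (∀ M ∈ mq.mark, ∀ m : S, IsLUB M m → IsLUB (t '' M) (t m)) ∧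
      (∀ (M : Set S) (m : S), IsGLB M m → IsGLB (t '' M) (t m)) ∧
      (∀ D : {D : Set S // IsAIdeal mq.mark D},
        IsLUB {E | E ∈ Set.range t ∧ E ≤ D} D) := by
  refine ⟨fun s => ⟨Set.Iic s, Iic_isAIdeal mq.mark s⟩, fun s => rfl, ?_, ?_, ?_, ?_, ?_⟩
  · intro a b
    constructor
    · intro h; exact h (le_refl a)
    · intro h x hx; exact le_trans hx h
  · intro a b
    apply le_antisymm
    · intro x hx I hI
      apply hI.1.1 hx
      apply hI.2
      exact subset_lowerClosure ⟨a, le_refl a, b, le_refl b, rfl⟩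
    · intro x hx
      refine hx (Set.Iic (a * b)) ⟨Iic_isAIdeal mq.mark _, ?_⟩
      intro y hy
      obtain ⟨z, ⟨u, hu, v, hv, rfl⟩, hyz⟩ := hy
      exact le_trans hyz (mul_le_mul' hu hv)
  · intro M hM m hm
    constructor
    · rintro E ⟨x, hx, rfl⟩ y hy
      exact le_trans hy (hm.1 hx)
    · rintro D hD y (hy : y ≤ m)
      refine D.2.1 hy (D.2.2 M hM ?_ m hm)
      intro x hx
      exact hD ⟨x, hx, rfl⟩ (le_refl x)
  · intro M m hm
    constructor
    · rintro E ⟨x, hx, rfl⟩ y (hy : y ≤ m)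
      exact le_trans hy (hm.1 hx)
    · rintro D hD y hy
      refine hm.2 fun x hx => ?_
      exact hD ⟨x, hx, rfl⟩ hy
  · intro D
    constructor
    · rintro E ⟨_, hE⟩; exact hE
    · intro F hF x hx
      exact hF ⟨⟨x, rfl⟩, fun y hy => D.2.1 hy hx⟩ (le_refl x)
end

section
/- Let (S, A) be a marked quantale, Q a quantale, and f: S → Q a posemigroup morphism such that f(⋁M) = ⋁f(M) for every admissible M ∈ A. Then there exists a unique quantale morphism g: Id_A(S) → Q with g ∘ t = f, where t(s) = s↓; explicitly, g(D) = ⋁ f(D). In particular, t: S → Id_A(S) is a reflection of (S,A) into the category of quantales, i.e., Id_A(S) is the free quantale over the marked quantale (S,A). -/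
open Pointwise

set_option linter.unusedSectionVars false
section Aux

variable {S : Type*} [Semigroup S] [PartialOrder S]
variable {Q : Type*} [Semigroup Q] [CompleteLattice Q] [IsQuantale Q]

lemma isAIdeal_Iic (A : Set (Set S)) (s : S) : IsAIdeal A (Set.Iic s) := by
  refine ⟨fun a b h hb => le_trans h hb, fun M _ hM m hm => hm.2 hM⟩

/-- The preimage of a lower cone under `f` is an `A`-ideal. -/
lemma isAIdeal_preimage (mq : MarkedQuantale S) (f : S → Q) (hmono : Monotone f)
    (hjoins : ∀ M ∈ mq.mark, ∀ m : S, IsLUB M m → f m = sSup (f '' M)) (q : Q) :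
    IsAIdeal mq.mark {x | f x ≤ q} := by
  constructor
  · intro a b hab hb
    exact le_trans (hmono hab) hb
  · intro M hMmark hM m hm
    have : f m = sSup (f '' M) := hjoins M hMmark m hm
    rw [Set.mem_setOf_eq, this]
    exact sSup_le (fun y hy => by
      obtain ⟨x, hx, rfl⟩ := hy
      exact hM hx)

end Aux


/-- Universal property: `t : S → Id_A(S)`, `t s = s↓`, is a reflection of the marked
quantale `(S, A)` into quantales. Any admissible-join-preserving posemigroup morphism
`f : S → Q` into a quantale factors uniquely through `t` via a quantale morphism
`g : Id_A(S) → Q`, and necessarily `g D = ⋁ f(D)`. -/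

theorem stmt7 {S : Type*} [Semigroup S] [PartialOrder S]
    [CovariantClass S S (· * ·) (· ≤ ·)]
    [CovariantClass S S (Function.swap (· * ·)) (· ≤ ·)]
    (mq : MarkedQuantale S)
    {Q : Type*} [Semigroup Q] [CompleteLattice Q] [IsQuantale Q]
    (f : S → Q) (hmono : Monotone f) (hmul : ∀ a b : S, f (a * b) = f a * f b)
    (hjoins : ∀ M ∈ mq.mark, ∀ m : S, IsLUB M m → f m = sSup (f '' M)) :
    (∃! g : {D : Set S // IsAIdeal mq.mark D} → Q,
      (∀ D E P : {D : Set S // IsAIdeal mq.mark D},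
        (↑P : Set S) = ⋂₀ {I : Set S | IsAIdeal mq.mark I ∧
          (↑(lowerClosure ((↑D : Set S) * (↑E : Set S))) : Set S) ⊆ I} →
        g P = g D * g E) ∧
      (∀ (F : Set {D : Set S // IsAIdeal mq.mark D}) (L : {D : Set S // IsAIdeal mq.mark D}),
        IsLUB F L → g L = ⨆ D ∈ F, g D) ∧
      (∀ (s : S) (hs : IsAIdeal mq.mark (Set.Iic s)), g ⟨Set.Iic s, hs⟩ = f s)) ∧
    (∀ g : {D : Set S // IsAIdeal mq.mark D} → Q,
      ((∀ D E P : {D : Set S // IsAIdeal mq.mark D},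
        (↑P : Set S) = ⋂₀ {I : Set S | IsAIdeal mq.mark I ∧
          (↑(lowerClosure ((↑D : Set S) * (↑E : Set S))) : Set S) ⊆ I} →
        g P = g D * g E) ∧
      (∀ (F : Set {D : Set S // IsAIdeal mq.mark D}) (L : {D : Set S // IsAIdeal mq.mark D}),
        IsLUB F L → g L = ⨆ D ∈ F, g D) ∧
      (∀ (s : S) (hs : IsAIdeal mq.mark (Set.Iic s)), g ⟨Set.Iic s, hs⟩ = f s)) →
      ∀ D : {D : Set S // IsAIdeal mq.mark D}, g D = sSup (f '' (↑D : Set S))) := by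
  classical
  set g₀ : {D : Set S // IsAIdeal mq.mark D} → Q := fun D => sSup (f '' (↑D : Set S)) with hg₀
  -- key: g₀ on principal ideals
  have hprin : ∀ (s : S) (hs : IsAIdeal mq.mark (Set.Iic s)), g₀ ⟨Set.Iic s, hs⟩ = f s := by
    intro s hs
    apply le_antisymm
    · exact sSup_le fun y hy => by
        obtain ⟨x, hx, rfl⟩ := hy
        exact hmono hx
    · exact le_sSup ⟨s, le_refl s, rfl⟩
  -- key: g₀ preserves arbitrary joins
  have hjoin : ∀ (F : Set {D : Set S // IsAIdeal mq.mark D})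
      (L : {D : Set S // IsAIdeal mq.mark D}), IsLUB F L → g₀ L = ⨆ D ∈ F, g₀ D := by
    intro F L hL
    apply le_antisymm
    · -- every element of L maps below the sup
      set q : Q := ⨆ D ∈ F, g₀ D with hq
      have hY : IsAIdeal mq.mark {x | f x ≤ q} :=
        isAIdeal_preimage mq f hmono hjoins q
      have hub : (⟨{x | f x ≤ q}, hY⟩ : {D : Set S // IsAIdeal mq.mark D}) ∈ upperBounds F := by
        intro D hD
        show (↑D : Set S) ⊆ {x | f x ≤ q}
        intro x hx
        have h1 : f x ≤ g₀ D := le_sSup ⟨x, hx, rfl⟩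
        exact le_trans h1 (le_iSup₂ (f := fun D _ => g₀ D) D hD)
      have hLY : (↑L : Set S) ⊆ {x | f x ≤ q} := hL.2 hub
      exact sSup_le fun y hy => by
        obtain ⟨x, hx, rfl⟩ := hy
        exact hLY hx
    · refine iSup₂_le fun D hD => ?_
      have : (↑D : Set S) ⊆ (↑L : Set S) := hL.1 hD
      exact sSup_le fun y hy => by
        obtain ⟨x, hx, rfl⟩ := hy
        exact le_sSup ⟨x, this hx, rfl⟩
  -- key: g₀ preserves multiplication
  have hmulg : ∀ D E P : {D : Set S // IsAIdeal mq.mark D},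
      (↑P : Set S) = ⋂₀ {I : Set S | IsAIdeal mq.mark I ∧
        (↑(lowerClosure ((↑D : Set S) * (↑E : Set S))) : Set S) ⊆ I} →
      g₀ P = g₀ D * g₀ E := by
    intro D E P hP
    have key : sSup (f '' ((↑D : Set S) * (↑E : Set S))) = g₀ D * g₀ E := by
      apply le_antisymm
      · refine sSup_le fun y hy => ?_
        obtain ⟨x, hx, rfl⟩ := hy
        obtain ⟨d, hd, e, he, rfl⟩ := hx
        rw [hmul]
        exact mul_le_mul' (le_sSup ⟨d, hd, rfl⟩) (le_sSup ⟨e, he, rfl⟩)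
      · rw [hg₀]
        simp only
        rw [sSup_mul_distrib]
        refine iSup₂_le fun a ha => ?_
        obtain ⟨d, hd, rfl⟩ := ha
        rw [mul_sSup_distrib]
        refine iSup₂_le fun b hb => ?_
        obtain ⟨e, he, rfl⟩ := hb
        rw [← hmul]
        exact le_sSup ⟨d * e, Set.mul_mem_mul hd he, rfl⟩
    rw [← key]
    set q : Q := sSup (f '' ((↑D : Set S) * (↑E : Set S))) with hq
    have hY : IsAIdeal mq.mark {x | f x ≤ q} :=
      isAIdeal_preimage mq f hmono hjoins q
    have hYmem : {x | f x ≤ q} ∈ {I : Set S | IsAIdeal mq.mark I ∧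
        (↑(lowerClosure ((↑D : Set S) * (↑E : Set S))) : Set S) ⊆ I} := by
      refine ⟨hY, ?_⟩
      intro x hx
      obtain ⟨y, hy, hxy⟩ := hx
      exact le_trans (hmono hxy) (le_sSup ⟨y, hy, rfl⟩)
    apply le_antisymm
    · refine sSup_le fun y hy => ?_
      obtain ⟨x, hx, rfl⟩ := hy
      rw [hP] at hx
      exact hx _ hYmem
    · refine sSup_le fun y hy => ?_
      obtain ⟨x, hx, rfl⟩ := hy
      refine le_sSup ⟨x, ?_, rfl⟩
      rw [hP]
      intro I hI
      exact hI.2 (subset_lowerClosure hx)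
  -- uniqueness half: any g satisfying the spec is g₀
  have huniq : ∀ g : {D : Set S // IsAIdeal mq.mark D} → Q,
      ((∀ D E P : {D : Set S // IsAIdeal mq.mark D},
        (↑P : Set S) = ⋂₀ {I : Set S | IsAIdeal mq.mark I ∧
          (↑(lowerClosure ((↑D : Set S) * (↑E : Set S))) : Set S) ⊆ I} →
        g P = g D * g E) ∧
      (∀ (F : Set {D : Set S // IsAIdeal mq.mark D}) (L : {D : Set S // IsAIdeal mq.mark D}),
        IsLUB F L → g L = ⨆ D ∈ F, g D) ∧
      (∀ (s : S) (hs : IsAIdeal mq.mark (Set.Iic s)), g ⟨Set.Iic s, hs⟩ = f s)) →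
      ∀ D : {D : Set S // IsAIdeal mq.mark D}, g D = sSup (f '' (↑D : Set S)) := by
    intro g ⟨_, hg2, hg3⟩ D
    set t : S → {D : Set S // IsAIdeal mq.mark D} :=
      fun s => ⟨Set.Iic s, isAIdeal_Iic mq.mark s⟩ with ht
    have hLUB : IsLUB (t '' (↑D : Set S)) D := by
      constructor
      · rintro P ⟨s, hs, rfl⟩
        show Set.Iic s ⊆ (↑D : Set S)
        intro x hx
        exact D.2.1 hx hs
      · intro E hE
        show (↑D : Set S) ⊆ (↑E : Set S)
        intro x hx
        have : t x ≤ E := hE ⟨x, hx, rfl⟩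
        exact this (le_refl x)
    have := hg2 (t '' (↑D : Set S)) D hLUB
    rw [this, iSup_image]
    have heq : ∀ s ∈ (↑D : Set S), g (t s) = f s := fun s _ =>
      hg3 s (isAIdeal_Iic mq.mark s)
    rw [sSup_image]
    exact biSup_congr heq
  constructor
  · exact ⟨g₀, ⟨hmulg, hjoin, hprin⟩, fun g hg => funext fun D => huniq g hg D⟩
  · exact huniq
end

section
/- Let (S, A) be a marked quantale. Then every closed lower set of S (i.e., every D with D̄ = D, where D̄ = {x : ∀a∈S, b,c∈S¹, bDc ⊆ a↓ ⟹ bxc ≤ a}) is an A-ideal of S; thus Q(S) ⊆ Id_A(S). -/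
open Pointwise

/-- For a marked quantale `(S, A)`, every closed lower set is an `A`-ideal;
thus `Q(S) ⊆ Id_A(S)`. -/
theorem stmt10 {S : Type*} [Semigroup S] [PartialOrder S]
    [CovariantClass S S (· * ·) (· ≤ ·)]
    [CovariantClass S S (Function.swap (· * ·)) (· ≤ ·)]
    (mq : MarkedQuantale S)
    (D : Set S) (hD : IsLowerSet D) (hclosed : pcl S D = D) :
    IsAIdeal mq.mark D := by
  refine ⟨hD, fun M hM hMD m hm => ?_⟩
  rw [← hclosed]
  intro a
  refine ⟨fun h => hm.2 fun d hd => h d (hMD hd), fun b h => ?_, fun c h => ?_, fun b c h => ?_⟩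
  · exact (mq.lub_mul_left M hM m hm b).2
      (fun y ⟨d, hd, hy⟩ => hy ▸ h d (hMD hd))
  · exact (mq.lub_mul_right M hM m hm c).2
      (fun y ⟨d, hd, hy⟩ => hy ▸ h d (hMD hd))
  · exact (mq.lub_mul_both M hM m hm b c).2
      (fun y ⟨d, hd, hy⟩ => hy ▸ h d (hMD hd))
end

section
/- Let (S, A) be a marked quantale and D ⊆ S a subset whose join ⋁D exists. Then the closure of D↓ satisfies (D↓)̄ ⊆ (⋁D)↓; moreover, if S is a quantale or D is admissible (D ∈ A), then (D↓)̄ = (⋁D)↓ and ⋁ (D↓)̄ = ⋁D. -/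
open Pointwise

/-- For a marked quantale `(S, A)` and `D ⊆ S` with `⋁ D = m`: `(D↓)̄ ⊆ m↓`;
if moreover `S` is a quantale or `D` is admissible, then `(D↓)̄ = m↓` and
`⋁ (D↓)̄ = m`. -/
theorem stmt11 {S : Type*} [Semigroup S] [PartialOrder S]
    [CovariantClass S S (· * ·) (· ≤ ·)]
    [CovariantClass S S (Function.swap (· * ·)) (· ≤ ·)]
    (mq : MarkedQuantale S)
    (D : Set S) (m : S) (hm : IsLUB D m) :
    pcl S ↑(lowerClosure D) ⊆ Set.Iic m ∧
    (((∀ T : Set S, ∃ b : S, IsLUB T b ∧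
        (∀ a : S, IsLUB ((a * ·) '' T) (a * b)) ∧
        (∀ c : S, IsLUB ((· * c) '' T) (b * c)) ∧
        (∀ a c : S, IsLUB ((fun x => a * x * c) '' T) (a * b * c))) ∨
      D ∈ mq.mark) →
      pcl S ↑(lowerClosure D) = Set.Iic m ∧
      IsLUB (pcl S ↑(lowerClosure D)) m) := by
  have hub : ∀ a : S, (∀ d ∈ (lowerClosure D : Set S), d ≤ a) ↔ (∀ d ∈ D, d ≤ a) := by
    intro a
    constructor
    · intro h d hd; exact h d (subset_lowerClosure hd)
    · rintro h d ⟨e, he, hde⟩; exact hde.trans (h e he)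
  have hsub : pcl S ↑(lowerClosure D) ⊆ Set.Iic m := by
    intro x hx
    exact (hx m).1 fun d hd => (hub m).2 (fun e he => hm.1 he) d hd
  refine ⟨hsub, fun hcase => ?_⟩
  -- distributivity facts for D with join m
  have hdist : (∀ a : S, IsLUB ((a * ·) '' D) (a * m)) ∧
      (∀ c : S, IsLUB ((· * c) '' D) (m * c)) ∧
      (∀ a c : S, IsLUB ((fun x => a * x * c) '' D) (a * m * c)) := by
    rcases hcase with hq | hmark
    · obtain ⟨b, hb, h1, h2, h3⟩ := hq D
      obtain rfl : m = b := hm.unique hb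
      exact ⟨h1, h2, h3⟩
    · exact ⟨fun a => mq.lub_mul_left D hmark m hm a,
        fun c => mq.lub_mul_right D hmark m hm c,
        fun a c => mq.lub_mul_both D hmark m hm a c⟩
  obtain ⟨hL, hR, hB⟩ := hdist
  have hmpcl : m ∈ pcl S ↑(lowerClosure D) := by
    intro a
    refine ⟨fun h => hm.2 fun d hd => h d (subset_lowerClosure hd) , ?_, ?_, ?_⟩
    · intro b h
      exact (hL b).2 (by rintro _ ⟨d, hd, rfl⟩; exact h d (subset_lowerClosure hd))
    · intro c h
      exact (hR c).2 (by rintro _ ⟨d, hd, rfl⟩; exact h d (subset_lowerClosure hd))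
    · intro b c h
      exact (hB b c).2 (by rintro _ ⟨d, hd, rfl⟩; exact h d (subset_lowerClosure hd))
  have hlower : ∀ x y : S, y ≤ x → x ∈ pcl S ↑(lowerClosure D) →
      y ∈ pcl S ↑(lowerClosure D) := by
    intro x y hyx hx a
    obtain ⟨h1, h2, h3, h4⟩ := hx a
    refine ⟨fun h => hyx.trans (h1 h), fun b h => ?_, fun c h => ?_, fun b c h => ?_⟩
    · exact (mul_le_mul_right hyx b).trans (h2 b h)
    · exact (mul_le_mul_left hyx c).trans (h3 c h)
    · exact (mul_le_mul_left (mul_le_mul_right hyx b) c).trans (h4 b c h)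
  have heq : pcl S ↑(lowerClosure D) = Set.Iic m :=
    le_antisymm hsub fun x hx => hlower m x hx hmpcl
  exact ⟨heq, heq ▸ isLUB_Iic⟩
end

section
/- Let f: S → T be a posemigroup morphism between posemigroups. The following are equivalent: (1) f is closure preserving, i.e., f((M↓)̄) ⊆ (f(M)↓)̄ for every M ⊆ S; (2) (f(M̄)↓)̄ = (f(M)↓)̄ for every lower set M of S; (3) (f⁻¹(M)↓)̄ = f⁻¹(M) for every closed lower set M of T. -/
open Pointwise

/-! The closure `pcl` is extensive, monotone and idempotent, and when multiplication is monotone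
its values are lower sets, so it absorbs lower closures. Hence each of the three conditions is
equivalent to `f '' pcl S M ⊆ pcl T (f '' M)` for all lower sets `M`: for (2) because this
inclusion is exactly `pcl T (f '' pcl S M) ⊆ pcl T (f '' M)`, and for (3) by the
argument that a map preserves closures iff preimages of closed sets are closed, applied to the
closed lower set `pcl T (f '' M)`. -/

section Closure

variable {S : Type*} [Semigroup S] [PartialOrder S]

lemma subset_pcl (D : Set S) : D ⊆ pcl S D := fun x hx _ =>
  ⟨fun h => h x hx, fun _ h => h x hx, fun _ h => h x hx, fun _ _ h => h x hx⟩

lemma pcl_mono {D E : Set S} (h : D ⊆ E) : pcl S D ⊆ pcl S E := fun _ hx a =>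
  let ⟨h₁, h₂, h₃, h₄⟩ := hx a
  ⟨fun hp => h₁ fun d hd => hp d (h hd),
   fun b hp => h₂ b fun d hd => hp d (h hd),
   fun c hp => h₃ c fun d hd => hp d (h hd),
   fun b c hp => h₄ b c fun d hd => hp d (h hd)⟩

lemma pcl_pcl (D : Set S) : pcl S (pcl S D) = pcl S D := by
  refine (subset_pcl _).antisymm' fun x hx a => ?_
  obtain ⟨h₁, h₂, h₃, h₄⟩ := hx a
  exact ⟨fun hp => h₁ fun d hd => (hd a).1 hp,
    fun b hp => h₂ b fun d hd => (hd a).2.1 b hp,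
    fun c hp => h₃ c fun d hd => (hd a).2.2.1 c hp,
    fun b c hp => h₄ b c fun d hd => (hd a).2.2.2 b c hp⟩

lemma pcl_subset_pcl_iff {D E : Set S} : pcl S D ⊆ pcl S E ↔ D ⊆ pcl S E :=
  ⟨(subset_pcl D).trans, fun h => (pcl_mono h).trans (pcl_pcl E).subset⟩

variable [CovariantClass S S (· * ·) (· ≤ ·)] [CovariantClass S S (Function.swap (· * ·)) (· ≤ ·)]

lemma isLowerSet_pcl (D : Set S) : IsLowerSet (pcl S D) := fun _ _ hyx hx a =>
  let ⟨h₁, h₂, h₃, h₄⟩ := hx a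
  ⟨fun hp => hyx.trans (h₁ hp),
   fun b hp => (mul_le_mul_right hyx b).trans (h₂ b hp),
   fun c hp => (mul_le_mul_left hyx c).trans (h₃ c hp),
   fun b c hp => (mul_le_mul_left (mul_le_mul_right hyx b) c).trans (h₄ b c hp)⟩

lemma lowerClosure_subset_pcl (D : Set S) : ↑(lowerClosure D) ⊆ pcl S D :=
  fun _ ⟨_, hd, hxd⟩ => isLowerSet_pcl D hxd (subset_pcl D hd)

lemma pcl_lowerClosure (D : Set S) : pcl S ↑(lowerClosure D) = pcl S D :=
  (pcl_subset_pcl_iff.2 (lowerClosure_subset_pcl D)).antisymm (pcl_mono subset_lowerClosure)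

end Closure

lemma image_lowerClosure_subset_pcl {S T : Type*} [Preorder S] [Semigroup T] [PartialOrder T]
    [CovariantClass T T (· * ·) (· ≤ ·)] [CovariantClass T T (Function.swap (· * ·)) (· ≤ ·)]
    {f : S → T} (hf : Monotone f) (M : Set S) : f '' ↑(lowerClosure M) ⊆ pcl T (f '' M) := by
  rintro _ ⟨x, ⟨m, hm, hxm⟩, rfl⟩
  exact isLowerSet_pcl _ (hf hxm) (subset_pcl _ (Set.mem_image_of_mem f hm))

section Morphism

variable {S T : Type*} [Semigroup S] [PartialOrder S] [Semigroup T] [PartialOrder T]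

lemma pcl_image_pcl_eq_iff (f : S → T) (M : Set S) :
    pcl T (f '' pcl S M) = pcl T (f '' M) ↔ f '' pcl S M ⊆ pcl T (f '' M) := by
  rw [← pcl_subset_pcl_iff]
  exact ⟨Eq.subset, fun h => h.antisymm (pcl_mono (Set.image_mono (subset_pcl M)))⟩

variable [CovariantClass T T (· * ·) (· ≤ ·)] [CovariantClass T T (Function.swap (· * ·)) (· ≤ ·)]
  {f : S → T}

lemma forall_image_pcl_lowerClosure_subset_iff (hf : Monotone f) :
    (∀ M : Set S, f '' pcl S ↑(lowerClosure M) ⊆ pcl T ↑(lowerClosure (f '' M))) ↔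
      ∀ M : Set S, IsLowerSet M → f '' pcl S M ⊆ pcl T (f '' M) := by
  simp only [pcl_lowerClosure (S := T)]
  refine ⟨fun h M hM => by simpa only [hM.lowerClosure] using h M, fun h M => ?_⟩
  calc f '' pcl S ↑(lowerClosure M)
      ⊆ pcl T (f '' ↑(lowerClosure M)) := h _ (lowerClosure M).lower
    _ ⊆ pcl T (f '' M) := pcl_subset_pcl_iff.2 (image_lowerClosure_subset_pcl hf M)

lemma forall_image_pcl_subset_iff_pcl_preimage_eq (hf : Monotone f) :
    (∀ M : Set S, IsLowerSet M → f '' pcl S M ⊆ pcl T (f '' M)) ↔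
      ∀ N : Set T, IsLowerSet N → pcl T N = N → pcl S (f ⁻¹' N) = f ⁻¹' N := by
  refine ⟨fun h N hN hNcl => ?_, fun h M _ => ?_⟩
  · refine (Set.image_subset_iff.1 ?_).antisymm (subset_pcl _)
    calc f '' pcl S (f ⁻¹' N) ⊆ pcl T (f '' (f ⁻¹' N)) := h _ (hN.preimage hf)
      _ ⊆ pcl T N := pcl_mono (Set.image_preimage_subset f N)
      _ = N := hNcl
  · have hclosed := h (pcl T (f '' M)) (isLowerSet_pcl _) (pcl_pcl _)
    exact Set.image_subset_iff.2 (hclosed ▸ pcl_mono (Set.image_subset_iff.1 (subset_pcl _)))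

end Morphism

theorem stmt12_general {S T : Type*} [Semigroup S] [PartialOrder S]
    [Semigroup T] [PartialOrder T]
    [CovariantClass T T (· * ·) (· ≤ ·)]
    [CovariantClass T T (Function.swap (· * ·)) (· ≤ ·)]
    (f : S → T) (hmono : Monotone f) :
    ((∀ M : Set S, f '' pcl S ↑(lowerClosure M) ⊆ pcl T ↑(lowerClosure (f '' M))) ↔
     (∀ M : Set S, IsLowerSet M →
        pcl T ↑(lowerClosure (f '' pcl S M)) = pcl T ↑(lowerClosure (f '' M)))) ∧
    ((∀ M : Set S, IsLowerSet M →
        pcl T ↑(lowerClosure (f '' pcl S M)) = pcl T ↑(lowerClosure (f '' M))) ↔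
     (∀ M : Set T, IsLowerSet M → pcl T M = M →
        pcl S ↑(lowerClosure (f ⁻¹' M)) = f ⁻¹' M)) := by
  have h₂ : (∀ M : Set S, IsLowerSet M →
        pcl T ↑(lowerClosure (f '' pcl S M)) = pcl T ↑(lowerClosure (f '' M))) ↔
      ∀ M : Set S, IsLowerSet M → f '' pcl S M ⊆ pcl T (f '' M) := by
    simp only [pcl_lowerClosure, pcl_image_pcl_eq_iff]
  have h₃ : (∀ M : Set T, IsLowerSet M → pcl T M = M →
        pcl S ↑(lowerClosure (f ⁻¹' M)) = f ⁻¹' M) ↔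
      ∀ M : Set T, IsLowerSet M → pcl T M = M → pcl S (f ⁻¹' M) = f ⁻¹' M :=
    forall_congr' fun M => imp_congr_right fun hM => by rw [(hM.preimage hmono).lowerClosure]
  exact ⟨(forall_image_pcl_lowerClosure_subset_iff hmono).trans h₂.symm,
    h₂.trans ((forall_image_pcl_subset_iff_pcl_preimage_eq hmono).trans h₃.symm)⟩

/-- Characterizations of closure-preserving posemigroup morphisms. -/
theorem stmt12 {S T : Type*} [Semigroup S] [PartialOrder S]
    [CovariantClass S S (· * ·) (· ≤ ·)]
    [CovariantClass S S (Function.swap (· * ·)) (· ≤ ·)]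
    [Semigroup T] [PartialOrder T]
    [CovariantClass T T (· * ·) (· ≤ ·)]
    [CovariantClass T T (Function.swap (· * ·)) (· ≤ ·)]
    (f : S → T) (hmono : Monotone f) (hmul : ∀ a b : S, f (a * b) = f a * f b) :
    ((∀ M : Set S, f '' pcl S ↑(lowerClosure M) ⊆ pcl T ↑(lowerClosure (f '' M))) ↔
     (∀ M : Set S, IsLowerSet M →
        pcl T ↑(lowerClosure (f '' pcl S M)) = pcl T ↑(lowerClosure (f '' M)))) ∧
    ((∀ M : Set S, IsLowerSet M →
        pcl T ↑(lowerClosure (f '' pcl S M)) = pcl T ↑(lowerClosure (f '' M))) ↔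
     (∀ M : Set T, IsLowerSet M → pcl T M = M →
        pcl S ↑(lowerClosure (f ⁻¹' M)) = f ⁻¹' M)) :=
  stmt12_general f hmono
end

section
/- Let S and T be quantales and f: S → T a posemigroup morphism. Then f preserves arbitrary joins (is a quantale morphism) if and only if f is closure preserving, i.e., f((D↓)̄) ⊆ (f(D)↓)̄ for all D ⊆ S, where D̄ denotes the closure D̄ = {x : ∀a, b,c ∈ S¹, bDc ⊆ a↓ ⟹ bxc ≤ a}. -/
open Pointwise

/-- In a quantale, the closure of any set is the down-set of its supremum. -/
lemma pcl_eq_Iic {S : Type*} [Semigroup S] [CompleteLattice S] [IsQuantale S] (D : Set S) :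
    pcl S D = Set.Iic (sSup D) := by
  ext x
  constructor
  · intro h
    exact (h (sSup D)).1 fun d hd => le_sSup hd
  · intro hx a
    refine ⟨fun h => hx.trans (sSup_le h), fun b h => ?_, fun c h => ?_, fun b c h => ?_⟩
    · calc b * x ≤ b * sSup D := mul_le_mul_right hx b
        _ = ⨆ d ∈ D, b * d := mul_sSup_distrib
        _ ≤ a := by exact iSup₂_le h
    · calc x * c ≤ sSup D * c := mul_le_mul_left hx c
        _ = ⨆ d ∈ D, d * c := sSup_mul_distrib
        _ ≤ a := by exact iSup₂_le h
    · calc b * x * c ≤ b * sSup D * c := mul_le_mul_left (mul_le_mul_right hx b) c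
        _ = sSup ((b * ·) '' D) * c := by rw [mul_sSup_distrib, sSup_image]
        _ = ⨆ y ∈ (b * ·) '' D, y * c := sSup_mul_distrib
        _ ≤ a := iSup₂_le (by rintro _ ⟨d, hd, rfl⟩; exact h d hd)

lemma sSup_lowerClosure' {S : Type*} [CompleteLattice S] (D : Set S) :
    sSup (lowerClosure D : Set S) = sSup D := by
  refine le_antisymm (sSup_le fun x hx => ?_) (sSup_le_sSup (subset_lowerClosure))
  obtain ⟨d, hd, hxd⟩ := hx
  exact hxd.trans (le_sSup hd)

/-- For quantales `S, T`, a posemigroup morphism `f : S → T` preserves arbitrary joins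
iff it is closure preserving. -/
theorem stmt13 {S T : Type*} [Semigroup S] [CompleteLattice S] [IsQuantale S]
    [Semigroup T] [CompleteLattice T] [IsQuantale T]
    (f : S → T) (hmono : Monotone f) (hmul : ∀ a b : S, f (a * b) = f a * f b) :
    (∀ A : Set S, f (sSup A) = ⨆ a ∈ A, f a) ↔
    (∀ D : Set S, f '' pcl S ↑(lowerClosure D) ⊆ pcl T ↑(lowerClosure (f '' D))) := by
  constructor
  · intro h D
    rw [pcl_eq_Iic, pcl_eq_Iic, sSup_lowerClosure', sSup_lowerClosure']
    rintro _ ⟨x, hx, rfl⟩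
    calc f x ≤ f (sSup D) := hmono hx
      _ = ⨆ a ∈ D, f a := h D
      _ = sSup (f '' D) := (sSup_image).symm
  · intro h A
    refine le_antisymm ?_ (iSup₂_le fun a ha => hmono (le_sSup ha))
    have := h A (Set.mem_image_of_mem f
      (by rw [pcl_eq_Iic, sSup_lowerClosure']; exact Set.mem_Iic.mpr le_rfl))
    rw [pcl_eq_Iic, sSup_lowerClosure', sSup_image] at this
    exact this
end

section
/- Let (S, A) and (T, B) be marked quantales and f: S → T a closure preserving posemigroup morphism. Then f preserves all admissible joins: f(⋁D) = ⋁ f(D) for every D ∈ A. -/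
open Pointwise

/-- A closure-preserving posemigroup morphism between marked quantales preserves all
admissible joins. -/
theorem stmt14 {S T : Type*} [Semigroup S] [PartialOrder S]
    [CovariantClass S S (· * ·) (· ≤ ·)]
    [CovariantClass S S (Function.swap (· * ·)) (· ≤ ·)]
    [Semigroup T] [PartialOrder T]
    [CovariantClass T T (· * ·) (· ≤ ·)]
    [CovariantClass T T (Function.swap (· * ·)) (· ≤ ·)]
    (mqS : MarkedQuantale S) (mqT : MarkedQuantale T)
    (f : S → T) (hmono : Monotone f) (hmul : ∀ a b : S, f (a * b) = f a * f b)
    (hcp : ∀ M : Set S, f '' pcl S ↑(lowerClosure M) ⊆ pcl T ↑(lowerClosure (f '' M))) :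
    ∀ D ∈ mqS.mark, ∀ m : S, IsLUB D m → IsLUB (f '' D) (f m) := by
  intro D hD m hm
  have hmem : m ∈ pcl S ↑(lowerClosure D) := by
    intro a
    refine ⟨?_, ?_, ?_, ?_⟩
    · intro h
      exact hm.2 fun d hd => h d ⟨d, hd, le_rfl⟩
    · intro b h
      exact (mqS.lub_mul_left D hD m hm b).2 fun x ⟨d, hd, hx⟩ =>
        hx ▸ h d ⟨d, hd, le_rfl⟩
    · intro c h
      exact (mqS.lub_mul_right D hD m hm c).2 fun x ⟨d, hd, hx⟩ =>
        hx ▸ h d ⟨d, hd, le_rfl⟩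
    · intro b c h
      exact (mqS.lub_mul_both D hD m hm b c).2 fun x ⟨d, hd, hx⟩ =>
        hx ▸ h d ⟨d, hd, le_rfl⟩
  have hfm : f m ∈ pcl T ↑(lowerClosure (f '' D)) := hcp D ⟨m, hmem, rfl⟩
  constructor
  · rintro _ ⟨d, hd, rfl⟩
    exact hmono (hm.1 hd)
  · intro u hu
    exact (hfm u).1 fun x ⟨y, hy, hxy⟩ => le_trans hxy (hu hy)
end

section
/- Let S and T be D-quantales (posemigroups regarded as marked quantales with marking D of all subsets M such that a(⋁M)b = ⋁(aMb) for all a,b ∈ S¹) and f: S → T a closure preserving posemigroup morphism. Then for every D-admissible D ⊆ S, f(D) is D-admissible in T and f(⋁D) = ⋁f(D); i.e., f is a D-quantale map. -/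
open Pointwise

/-- A closure-preserving posemigroup morphism between `𝒟`-quantales is a `𝒟`-quantale
map: it sends `𝒟`-admissible sets to `𝒟`-admissible sets and preserves their joins. -/
theorem stmt15 {S T : Type*} [Semigroup S] [PartialOrder S]
    [CovariantClass S S (· * ·) (· ≤ ·)]
    [CovariantClass S S (Function.swap (· * ·)) (· ≤ ·)]
    [Semigroup T] [PartialOrder T]
    [CovariantClass T T (· * ·) (· ≤ ·)]
    [CovariantClass T T (Function.swap (· * ·)) (· ≤ ·)]
    (f : S → T) (hmono : Monotone f) (hmul : ∀ a b : S, f (a * b) = f a * f b)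
    (hcp : ∀ M : Set S, f '' pcl S ↑(lowerClosure M) ⊆ pcl T ↑(lowerClosure (f '' M))) :
    ∀ D ∈ DMark S, f '' D ∈ DMark T ∧ ∀ m : S, IsLUB D m → IsLUB (f '' D) (f m) := by
  intro D hD
  obtain ⟨m, hm, hl, hr, hb⟩ := hD
  have hmpcl : m ∈ pcl S ↑(lowerClosure D) := by
    intro a
    refine ⟨fun h => hm.2 fun d hd => h d (subset_lowerClosure hd),
            fun b h => (hl b).2 ?_,
            fun c h => (hr c).2 ?_,
            fun b c h => (hb b c).2 ?_⟩
    · rintro _ ⟨d, hd, rfl⟩; exact h _ (subset_lowerClosure hd)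
    · rintro _ ⟨d, hd, rfl⟩; exact h _ (subset_lowerClosure hd)
    · rintro _ ⟨d, hd, rfl⟩; exact h _ (subset_lowerClosure hd)
  have hfm : f m ∈ pcl T ↑(lowerClosure (f '' D)) := hcp D ⟨m, hmpcl, rfl⟩
  have hlub : IsLUB (f '' D) (f m) := by
    constructor
    · rintro _ ⟨d, hd, rfl⟩; exact hmono (hm.1 hd)
    · intro a ha
      refine (hfm a).1 fun e he => ?_
      obtain ⟨d, hd, hle⟩ := he
      exact hle.trans (ha hd)
  have hlubl : ∀ b : T, IsLUB ((b * ·) '' (f '' D)) (b * f m) := by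
    intro b
    constructor
    · rintro _ ⟨_, ⟨d, hd, rfl⟩, rfl⟩; exact mul_le_mul_right (hmono (hm.1 hd)) b
    · intro a ha
      refine (hfm a).2.1 b fun e he => ?_
      obtain ⟨d, hd, hle⟩ := he
      exact (mul_le_mul_right hle b).trans (ha ⟨d, hd, rfl⟩)
  have hlubr : ∀ c : T, IsLUB ((· * c) '' (f '' D)) (f m * c) := by
    intro c
    constructor
    · rintro _ ⟨_, ⟨d, hd, rfl⟩, rfl⟩; exact mul_le_mul_left (hmono (hm.1 hd)) c
    · intro a ha
      refine (hfm a).2.2.1 c fun e he => ?_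
      obtain ⟨d, hd, hle⟩ := he
      exact (mul_le_mul_left hle c).trans (ha ⟨d, hd, rfl⟩)
  have hlubb : ∀ b c : T, IsLUB ((fun x => b * x * c) '' (f '' D)) (b * f m * c) := by
    intro b c
    constructor
    · rintro _ ⟨_, ⟨d, hd, rfl⟩, rfl⟩
      exact mul_le_mul_left (mul_le_mul_right (hmono (hm.1 hd)) b) c
    · intro a ha
      refine (hfm a).2.2.2 b c fun e he => ?_
      obtain ⟨d, hd, hle⟩ := he
      exact (mul_le_mul_left (mul_le_mul_right hle b) c).trans (ha ⟨d, hd, rfl⟩)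
  refine ⟨⟨f m, hlub, hlubl, hlubr, hlubb⟩, fun m' hm' => ?_⟩
  rw [hm'.unique hm]
  exact hlub
end

section
/- Let S be a posemigroup, Q a quantale, and f: S → Q a closure-preserving posemigroup morphism that is also an order embedding. Then the unique quantale morphism g: Q(S) → Q with g ∘ τ = f (where τ(s) = s↓ and g(D) = ⋁f(D)) is also an order embedding. -/
open Pointwise

/-! Since `f` is multiplicative and a quantale's multiplications preserve joins, each of the four
translations `x ↦ x, b x, x c, b x c` occurring in `pcl` commutes with `f` up to a
join-preserving map of `Q`. So if `f x ≤ ⋁ f(E)`, every bound `a` of a translate of `E` also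
bounds the translate of `x` after applying `f`, hence before, by the order embedding; that is,
`x ∈ Ē = E`. -/

namespace sSupHom

variable {Q : Type*} [Semigroup Q] [CompleteLattice Q] [IsQuantale Q]

def mulLeft (u : Q) : sSupHom Q Q where
  toFun := (u * ·)
  map_sSup' T := by rw [mul_sSup_distrib, sSup_image]

def mulRight (v : Q) : sSupHom Q Q where
  toFun := (· * v)
  map_sSup' T := by rw [sSup_mul_distrib, sSup_image]

@[simp]
theorem mulLeft_apply (u y : Q) : mulLeft u y = u * y := rfl

@[simp]
theorem mulRight_apply (v y : Q) : mulRight v y = y * v := rfl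

end sSupHom

theorem le_of_map_le_sSup_image {S Q : Type*} [LE S] [CompleteLattice Q] {f : S → Q}
    (hemb : ∀ a b : S, f a ≤ f b ↔ a ≤ b) {φ : S → S}
    (ψ : sSupHom Q Q) (hφ : ∀ s, f (φ s) = ψ (f s)) {E : Set S} {x a : S}
    (hx : f x ≤ sSup (f '' E)) (ha : ∀ d ∈ E, φ d ≤ a) : φ x ≤ a := by
  rw [← hemb, hφ]
  calc ψ (f x) ≤ ψ (sSup (f '' E)) := OrderHomClass.mono ψ hx
    _ = sSup (ψ '' (f '' E)) := map_sSup ψ _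
    _ ≤ f a := sSup_le <| by
      rintro _ ⟨_, ⟨d, hd, rfl⟩, rfl⟩
      rw [← hφ]
      exact (hemb _ _).2 (ha d hd)

theorem mem_pcl_of_map_le_sSup_image {S Q : Type*} [Semigroup S] [PartialOrder S]
    [Semigroup Q] [CompleteLattice Q] [IsQuantale Q] {f : S → Q}
    (hmul : ∀ a b : S, f (a * b) = f a * f b) (hemb : ∀ a b : S, f a ≤ f b ↔ a ≤ b)
    {E : Set S} {x : S} (hx : f x ≤ sSup (f '' E)) : x ∈ pcl S E := fun a =>
  ⟨le_of_map_le_sSup_image (φ := id) hemb (sSupHom.id Q) (fun _ => rfl) hx,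
    fun b => le_of_map_le_sSup_image hemb (sSupHom.mulLeft (f b)) (fun _ => hmul _ _) hx,
    fun c => le_of_map_le_sSup_image hemb (sSupHom.mulRight (f c)) (fun _ => hmul _ _) hx,
    fun b c => le_of_map_le_sSup_image hemb
      ((sSupHom.mulRight (f c)).comp (sSupHom.mulLeft (f b))) (fun _ => by simp [hmul]) hx⟩

theorem stmt18_general {S : Type*} [Semigroup S] [PartialOrder S]
    {Q : Type*} [Semigroup Q] [CompleteLattice Q] [IsQuantale Q]
    (f : S → Q) (hmul : ∀ a b : S, f (a * b) = f a * f b)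
    (hemb : ∀ a b : S, f a ≤ f b ↔ a ≤ b) :
    ∀ D E : {D : Set S // IsLowerSet D ∧ pcl S D = D},
      sSup (f '' (↑D : Set S)) ≤ sSup (f '' (↑E : Set S)) ↔ D ≤ E := by
  intro D E
  refine ⟨fun h x hx => ?_, fun h => sSup_le_sSup (Set.image_mono h)⟩
  rw [← E.2.2]
  exact mem_pcl_of_map_le_sSup_image hmul hemb ((le_sSup (Set.mem_image_of_mem f hx)).trans h)

/-- If `f : S → Q` is a closure-preserving posemigroup morphism into a quantale which
is an order embedding, then the induced quantale morphism `g : Q(S) → Q`,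
`g D = ⋁ f(D)`, is also an order embedding. -/
theorem stmt18 {S : Type*} [Semigroup S] [PartialOrder S]
    [CovariantClass S S (· * ·) (· ≤ ·)]
    [CovariantClass S S (Function.swap (· * ·)) (· ≤ ·)]
    {Q : Type*} [Semigroup Q] [CompleteLattice Q] [IsQuantale Q]
    (f : S → Q) (hmul : ∀ a b : S, f (a * b) = f a * f b)
    (hcp : ∀ M : Set S, f '' pcl S ↑(lowerClosure M) ⊆ pcl Q ↑(lowerClosure (f '' M)))
    (hemb : ∀ a b : S, f a ≤ f b ↔ a ≤ b) :
    ∀ D E : {D : Set S // IsLowerSet D ∧ pcl S D = D},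
      sSup (f '' (↑D : Set S)) ≤ sSup (f '' (↑E : Set S)) ↔ D ≤ E :=
  stmt18_general f hmul hemb
end
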